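/- Let f be analytic on a neighborhood of [-1,1] with |⟨f, P_k⟩_{L²([-1,1])}| ≤ c ρ^{-k} for all k ≥ 0, for some ρ > 1 and c > 0, where P_k is the k-th (unnormalized) Legendre polynomial. Then the tail of the normalized Legendre expansion satisfies Σ_{k=n+1}^∞ |⟨f, w_k⟩|² ≤ (2c²/(1−ρ⁻²)²) · n · ρ^{−2n}, where w_{k+1} = √(k+½) P_k; hence ‖P_{W_n^⊥} f‖_{L²([-1,1])} ≤ C √n ρ^{−n} for a constant C depending only on c and ρ. -/

import Mathlib

/-! The weighted tail `∑_{k ≥ n} (k + 1/2) a_k²` is dominated termwise by the series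
`c² ∑_{k ≥ n} (k + 1/2) s^k` with `s = ρ⁻²`, whose value
`c² sⁿ ((n + 1/2)/(1 - s) + s/(1 - s)²)` is at most `2 c² n sⁿ / (1 - s)²` once `n ≥ 1`. -/

open Polynomial intervalIntegral

noncomputable section

/-- The `k`-th (unnormalized) Legendre polynomial, via the Rodrigues formula
`P_k = (1/(2^k k!)) dᵏ/dxᵏ (x² − 1)ᵏ`. -/
def legendre (k : ℕ) : Polynomial ℝ :=
  ((1 : ℝ) / (2 ^ k * k.factorial)) • (derivative^[k] ((X ^ 2 - 1) ^ k))

theorem hasSum_add_half_mul_geometric_tail {s : ℝ} (hs0 : 0 ≤ s) (hs1 : s < 1) (n : ℕ) :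
    HasSum (fun k : ℕ => (((n + k : ℕ) : ℝ) + 1 / 2) * s ^ (n + k))
      (s ^ n * ((n + 1 / 2) / (1 - s) + s / (1 - s) ^ 2)) := by
  have hs : ‖s‖ < 1 := by rwa [Real.norm_of_nonneg hs0]
  have h := (((hasSum_geometric_of_lt_one hs0 hs1).mul_left ((n : ℝ) + 1 / 2)).add
    (hasSum_coe_mul_geometric_of_norm_lt_one hs)).mul_left (s ^ n)
  have hterm : (fun k : ℕ => (((n + k : ℕ) : ℝ) + 1 / 2) * s ^ (n + k)) =
      fun k : ℕ => s ^ n * (((n : ℝ) + 1 / 2) * s ^ k + k * s ^ k) := by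
    funext k
    push_cast
    ring
  rwa [hterm, div_eq_mul_inv]

theorem add_half_mul_geometric_tail_le {s : ℝ} (hs0 : 0 ≤ s) (hs1 : s < 1) {n : ℕ}
    (hn : 1 ≤ n) :
    s ^ n * ((n + 1 / 2) / (1 - s) + s / (1 - s) ^ 2) ≤ 2 * n * s ^ n / (1 - s) ^ 2 := by
  have h1s : 0 < 1 - s := by linarith
  have hn' : (1 : ℝ) ≤ n := by exact_mod_cast hn
  have hnum : ((n : ℝ) + 1 / 2) * (1 - s) + s ≤ 2 * n := by nlinarith
  calc s ^ n * ((n + 1 / 2) / (1 - s) + s / (1 - s) ^ 2)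
      = s ^ n * (((n : ℝ) + 1 / 2) * (1 - s) + s) / (1 - s) ^ 2 := by
        field_simp
    _ ≤ s ^ n * (2 * n) / (1 - s) ^ 2 := by gcongr
    _ = 2 * n * s ^ n / (1 - s) ^ 2 := by ring

theorem tsum_add_half_mul_sq_tail_le {a : ℕ → ℝ} {c r : ℝ} (hr0 : 0 ≤ r) (hr1 : r < 1)
    (ha : ∀ k, |a k| ≤ c * r ^ k) {n : ℕ} (hn : 1 ≤ n) :
    ∑' k : ℕ, (((n + k : ℕ) : ℝ) + 1 / 2) * a (n + k) ^ 2 ≤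
      2 * c ^ 2 / (1 - r ^ 2) ^ 2 * n * r ^ (2 * n) := by
  set s := r ^ 2
  have hs0 : 0 ≤ s := by positivity
  have hs1 : s < 1 := pow_lt_one₀ hr0 hr1 two_ne_zero
  have hmajorant := (hasSum_add_half_mul_geometric_tail hs0 hs1 n).mul_left (c ^ 2)
  have hsq : ∀ k, a k ^ 2 ≤ c ^ 2 * s ^ k := fun k =>
    calc a k ^ 2 = |a k| ^ 2 := (sq_abs _).symm
      _ ≤ (c * r ^ k) ^ 2 := pow_le_pow_left₀ (abs_nonneg _) (ha k) 2
      _ = c ^ 2 * s ^ k := by rw [mul_pow, ← pow_mul, ← pow_mul, mul_comm k]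
  have hle : ∀ k : ℕ, (((n + k : ℕ) : ℝ) + 1 / 2) * a (n + k) ^ 2 ≤
      c ^ 2 * ((((n + k : ℕ) : ℝ) + 1 / 2) * s ^ (n + k)) := fun k => by
    rw [mul_left_comm]
    exact mul_le_mul_of_nonneg_left (hsq _) (by positivity)
  have hsummable := hmajorant.summable
  calc ∑' k : ℕ, (((n + k : ℕ) : ℝ) + 1 / 2) * a (n + k) ^ 2
      ≤ ∑' k : ℕ, c ^ 2 * ((((n + k : ℕ) : ℝ) + 1 / 2) * s ^ (n + k)) :=
        Summable.tsum_le_tsum hle (hsummable.of_nonneg_of_le (fun k => by positivity) hle)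
          hsummable
    _ = c ^ 2 * (s ^ n * ((n + 1 / 2) / (1 - s) + s / (1 - s) ^ 2)) := hmajorant.tsum_eq
    _ ≤ c ^ 2 * (2 * n * s ^ n / (1 - s) ^ 2) := by
        gcongr
        exact add_half_mul_geometric_tail_le hs0 hs1 hn
    _ = 2 * c ^ 2 / (1 - r ^ 2) ^ 2 * n * r ^ (2 * n) := by
        rw [← pow_mul]
        ring

theorem legendre_tail_bound_general
    (f : ℝ → ℝ)
    (c ρ : ℝ) (hc : 0 < c) (hρ : 1 < ρ)
    (ha : ∀ k : ℕ, |∫ x in (-1 : ℝ)..1, f x * (legendre k).eval x| ≤ c * ρ⁻¹ ^ k) :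
    (∀ n : ℕ, 1 ≤ n →
      (∑' k : ℕ, (((n + k : ℕ) : ℝ) + 1 / 2) *
          (∫ x in (-1 : ℝ)..1, f x * (legendre (n + k)).eval x) ^ 2) ≤
        2 * c ^ 2 / (1 - ρ⁻¹ ^ 2) ^ 2 * n * ρ⁻¹ ^ (2 * n)) ∧
    ∃ C > 0, ∀ n : ℕ, 1 ≤ n →
      Real.sqrt (∑' k : ℕ, (((n + k : ℕ) : ℝ) + 1 / 2) *
          (∫ x in (-1 : ℝ)..1, f x * (legendre (n + k)).eval x) ^ 2) ≤
        C * Real.sqrt n * ρ⁻¹ ^ n := by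
  have hq0 : 0 ≤ ρ⁻¹ := by positivity
  have hq1 : ρ⁻¹ < 1 := inv_lt_one_of_one_lt₀ hρ
  have hgap : 0 < 1 - ρ⁻¹ ^ 2 := sub_pos.mpr (pow_lt_one₀ hq0 hq1 two_ne_zero)
  have htail := fun n (hn : 1 ≤ n) => tsum_add_half_mul_sq_tail_le hq0 hq1 ha hn
  refine ⟨htail, √(2 * c ^ 2 / (1 - ρ⁻¹ ^ 2) ^ 2), by positivity, fun n hn => ?_⟩
  calc √(∑' k : ℕ, (((n + k : ℕ) : ℝ) + 1 / 2) *
          (∫ x in (-1 : ℝ)..1, f x * (legendre (n + k)).eval x) ^ 2)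
      ≤ √(2 * c ^ 2 / (1 - ρ⁻¹ ^ 2) ^ 2 * n * ρ⁻¹ ^ (2 * n)) := Real.sqrt_le_sqrt (htail n hn)
    _ = √(2 * c ^ 2 / (1 - ρ⁻¹ ^ 2) ^ 2) * √n * ρ⁻¹ ^ n := by
        rw [Real.sqrt_mul (by positivity), Real.sqrt_mul (by positivity), mul_comm 2 n, pow_mul,
          Real.sqrt_sq (by positivity)]

/-- Let `f` be analytic on a neighborhood of `[-1,1]` with Legendre
coefficients `a_k = ⟨f, P_k⟩_{L²([-1,1])}` satisfying `|a_k| ≤ c ρ^{−k}` for some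
`ρ > 1`, `c > 0`. Then for `n ≥ 1` the tail of the normalized Legendre expansion
(`w_{k+1} = √(k+1/2) P_k`) satisfies
`Σ_{k=n}^∞ (k+1/2) a_k² ≤ (2c²/(1−ρ⁻²)²) n ρ^{−2n}`; hence
`‖P_{𝒲_n^⊥} f‖ ≤ C √n ρ^{−n}` for a constant `C` depending only on `c` and `ρ`. -/
theorem legendre_tail_bound
    (f : ℝ → ℝ) (hf : AnalyticOnNhd ℝ f (Set.Icc (-1 : ℝ) 1))
    (c ρ : ℝ) (hc : 0 < c) (hρ : 1 < ρ)
    (ha : ∀ k : ℕ, |∫ x in (-1 : ℝ)..1, f x * (legendre k).eval x| ≤ c * ρ⁻¹ ^ k) :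
    (∀ n : ℕ, 1 ≤ n →
      (∑' k : ℕ, (((n + k : ℕ) : ℝ) + 1 / 2) *
          (∫ x in (-1 : ℝ)..1, f x * (legendre (n + k)).eval x) ^ 2) ≤
        2 * c ^ 2 / (1 - ρ⁻¹ ^ 2) ^ 2 * n * ρ⁻¹ ^ (2 * n)) ∧
    ∃ C > 0, ∀ n : ℕ, 1 ≤ n →
      Real.sqrt (∑' k : ℕ, (((n + k : ℕ) : ℝ) + 1 / 2) *
          (∫ x in (-1 : ℝ)..1, f x * (legendre (n + k)).eval x) ^ 2) ≤
        C * Real.sqrt n * ρ⁻¹ ^ n :=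
  legendre_tail_bound_general f c ρ hc hρ ha
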